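/- arXiv:2505.00291 — 3 statements merged into one kernel-verified Lean document; each statement's English description precedes it below -/
import Mathlib

section
/- Let G and H be connected featured graphs of the same order n = |G| = |H|, and let v₀ ∈ V(G), w₀ ∈ V(H) satisfy mpc^t_G(v₀) = mpc^t_H(w₀) for some t ≥ 2n. Then Color Refinement does not distinguish G and H, that is, for every s ≥ 0 the multisets ⟦mpc^s_G(v) : v ∈ V(G)⟧ and ⟦mpc^s_H(w) : w ∈ V(H)⟧ are equal. -/
/-- A featured graph: a finite simple graph on `Fin n` with a feature map to binary strings. -/
structure FeaturedGraph where
  n : ℕ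
  adj : SimpleGraph (Fin n)
  adjDec : DecidableRel adj.Adj
  feature : Fin n → List Bool

/-- The neighbors of a vertex, as a finset. -/
def FeaturedGraph.nbrs (G : FeaturedGraph) (v : Fin G.n) : Finset (Fin G.n) :=
  letI := G.adjDec
  Finset.univ.filter (fun w => G.adj.Adj v w)

/-- The type of Color Refinement colors after `t` rounds. -/
def Color : ℕ → Type := fun t => Nat.rec (List Bool) (fun _ C => C × Multiset C) t

/-- The message-passing (Color Refinement) color of a vertex after `t` rounds. -/
def mpc (G : FeaturedGraph) : (t : ℕ) → Fin G.n → Color t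
  | 0, v => (G.feature v : List Bool)
  | t + 1, v =>
      ((mpc G t v, (G.nbrs v).val.map (mpc G t)) : Color t × Multiset (Color t))

/- ### Auxiliary development -/

instance colorDecEq : ∀ t, DecidableEq (Color t)
  | 0 => inferInstanceAs (DecidableEq (List Bool))
  | t+1 => letI := colorDecEq t; inferInstanceAs (DecidableEq (Color t × Multiset (Color t)))

namespace CRAux

lemma nbrs_mem {G : FeaturedGraph} {v w : Fin G.n} : w ∈ G.nbrs v ↔ G.adj.Adj v w := by
  letI := G.adjDec
  simp [FeaturedGraph.nbrs]

variable (G H : FeaturedGraph)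

abbrev V2 := Fin G.n ⊕ Fin H.n

/-- neighbors in the disjoint union -/
def nbrs2 : V2 G H → Finset (V2 G H)
  | .inl v => (G.nbrs v).map ⟨Sum.inl, Sum.inl_injective⟩
  | .inr w => (H.nbrs w).map ⟨Sum.inr, Sum.inr_injective⟩

/-- colors in the disjoint union -/
def cc : (t : ℕ) → V2 G H → Color t
  | 0, x => (Sum.elim G.feature H.feature x : List Bool)
  | t+1, x => ((cc t x, (nbrs2 G H x).val.map (cc t)) : Color t × Multiset (Color t))

variable {G H}

lemma cc_succ (t : ℕ) (x : V2 G H) :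
    cc G H (t+1) x = ((cc G H t x, (nbrs2 G H x).val.map (cc G H t)) :
      Color t × Multiset (Color t)) := rfl

lemma cc_fst (t : ℕ) (x : V2 G H) :
    (cc G H (t+1) x : Color t × Multiset (Color t)).1 = cc G H t x := rfl

lemma cc_inl : ∀ (t : ℕ) (v : Fin G.n), cc G H t (.inl v) = mpc G t v
  | 0, v => rfl
  | t+1, v => by
    show ((_, _) : Color t × Multiset (Color t)) = ((_, _) : Color t × Multiset (Color t))
    congr 1
    · exact cc_inl t v
    · show ((G.nbrs v).map ⟨Sum.inl, Sum.inl_injective⟩).val.map (cc G H t)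
        = (G.nbrs v).val.map (mpc G t)
      rw [Finset.map_val, Multiset.map_map]
      exact Multiset.map_congr rfl (fun w _ => cc_inl t w)

lemma cc_inr : ∀ (t : ℕ) (w : Fin H.n), cc G H t (.inr w) = mpc H t w
  | 0, w => rfl
  | t+1, w => by
    show ((_, _) : Color t × Multiset (Color t)) = ((_, _) : Color t × Multiset (Color t))
    congr 1
    · exact cc_inr t w
    · show ((H.nbrs w).map ⟨Sum.inr, Sum.inr_injective⟩).val.map (cc G H t)
        = (H.nbrs w).val.map (mpc H t)
      rw [Finset.map_val, Multiset.map_map]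
      exact Multiset.map_congr rfl (fun u _ => cc_inr t u)

/-- downward projection of color equality -/
lemma cc_proj {x y : V2 G H} : ∀ {s s' : ℕ}, s ≤ s' →
    cc G H s' x = cc G H s' y → cc G H s x = cc G H s y := by
  intro s s' hss' h
  induction s' with
  | zero => obtain rfl : s = 0 := Nat.le_zero.mp hss'; exact h
  | succ s' ih =>
    rcases Nat.lt_or_ge s (s'+1) with hlt | hge
    · exact ih (Nat.lt_succ_iff.mp hlt)
        (by rw [← cc_fst s' x, ← cc_fst s' y, h])
    · obtain rfl : s = s' + 1 := le_antisymm hss' hge; exact h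

/-- multiset factoring lemma -/
lemma map_eq_map_of_factor {α β γ : Type*} {m₁ m₂ : Multiset α} {f : α → β} {g : α → γ}
    (h : m₁.map f = m₂.map f) (hfg : ∀ a b, f a = f b → g a = g b) :
    m₁.map g = m₂.map g := by
  rw [← Multiset.rel_eq] at h ⊢
  rw [Multiset.rel_map] at h ⊢
  exact h.mono fun a _ b _ hab => hfg a b hab

/-- stability at round `s` -/
def Stb (s : ℕ) : Prop :=
  ∀ x y : V2 G H, cc G H s x = cc G H s y → cc G H (s+1) x = cc G H (s+1) y

lemma stb_succ {s : ℕ} (hs : Stb (G := G) (H := H) s) : Stb (G := G) (H := H) (s+1) := by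
  intro x y h
  have h2 : (nbrs2 G H x).val.map (cc G H s) = (nbrs2 G H y).val.map (cc G H s) :=
    congrArg Prod.snd h
  rw [cc_succ (s+1) x, cc_succ (s+1) y]
  refine congrArg₂ Prod.mk h ?_
  exact map_eq_map_of_factor h2 hs

lemma stb_ge {s₀ : ℕ} (hs : Stb (G := G) (H := H) s₀) {s : ℕ} (h : s₀ ≤ s) :
    Stb (G := G) (H := H) s := by
  induction s with
  | zero => obtain rfl : s₀ = 0 := Nat.le_zero.mp h; exact hs
  | succ s ih =>
    rcases Nat.lt_or_ge s₀ (s+1) with hlt | hge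
    · exact stb_succ (ih (Nat.lt_succ_iff.mp hlt))
    · obtain rfl : s₀ = s + 1 := le_antisymm h hge; exact hs


open Finset in
/-- number of color classes at round s -/
noncomputable def kc (s : ℕ) : ℕ := ((Finset.univ : Finset (V2 G H)).image (cc G H s)).card

variable (G H)

lemma kc_mono (s : ℕ) : kc (G := G) (H := H) s ≤ kc (G := G) (H := H) (s+1) := by
  classical
  have himg : (Finset.univ : Finset (V2 G H)).image (cc G H s)
      = ((Finset.univ : Finset (V2 G H)).image (cc G H (s+1))).image
          (fun p : Color s × Multiset (Color s) => p.1) := by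
    refine Eq.trans ?_ Finset.image_image.symm
    exact Finset.image_congr (fun x _ => (cc_fst s x).symm)
  rw [kc, kc, himg]
  exact Finset.card_image_le

lemma stb_of_kc_eq {s : ℕ}
    (hk : kc (G := G) (H := H) (s+1) ≤ kc (G := G) (H := H) s) :
    Stb (G := G) (H := H) s := by
  classical
  set S := (Finset.univ : Finset (V2 G H)).image (cc G H (s+1)) with hS
  have himg : (Finset.univ : Finset (V2 G H)).image (cc G H s)
      = S.image (fun p : Color s × Multiset (Color s) => p.1) := by
    rw [hS]
    refine Eq.trans ?_ Finset.image_image.symm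
    exact Finset.image_congr (fun x _ => (cc_fst s x).symm)
  have hcard : (S.image (fun p : Color s × Multiset (Color s) => p.1)).card = S.card := by
    refine le_antisymm Finset.card_image_le ?_
    rw [← himg]; exact hk
  have hinj := Finset.card_image_iff.mp hcard
  intro x y hxy
  have hx : cc G H (s+1) x ∈ (S : Set (Color (s+1))) := by
    simp [hS]
  have hy : cc G H (s+1) y ∈ (S : Set (Color (s+1))) := by
    simp [hS]
  exact hinj hx hy hxy

lemma exists_stb (hn : G.n = H.n) (hpos : 0 < G.n) : ∃ s₀ < 2 * G.n, Stb (G := G) (H := H) s₀ := by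
  classical
  by_contra hcon
  push_neg at hcon
  have hstep : ∀ s < 2 * G.n,
      kc (G := G) (H := H) s < kc (G := G) (H := H) (s+1) := by
    intro s hs
    rcases Nat.lt_or_ge (kc (G := G) (H := H) s) (kc (G := G) (H := H) (s+1)) with h | h
    · exact h
    · exact absurd (stb_of_kc_eq G H h) (hcon s hs)
  have hgrow : ∀ j, j ≤ 2 * G.n → j + kc (G := G) (H := H) 0 ≤ kc (G := G) (H := H) j := by
    intro j hj
    induction j with
    | zero => simp
    | succ j ih =>
      have h1 := ih (Nat.le_of_succ_le hj)
      have h2 := hstep j (Nat.lt_of_succ_le hj)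
      omega
  have hk0 : 1 ≤ kc (G := G) (H := H) 0 := by
    rw [kc]
    refine Finset.card_pos.mpr ⟨cc G H 0 (Sum.inl ⟨0, hpos⟩), by simp⟩
  have hbound : kc (G := G) (H := H) (2 * G.n) ≤ Fintype.card (V2 G H) :=
    le_trans Finset.card_image_le (by simp)
  have hcardV : Fintype.card (V2 G H) = G.n + H.n := by simp
  have := hgrow (2 * G.n) le_rfl
  rw [hcardV, ← hn] at hbound
  omega


variable {G H}

section Stable

variable (s₀ : ℕ)

/-- count of color `e` among the neighbors of `x` -/
noncomputable def mdeg (x : V2 G H) (e : Color s₀) : ℕ :=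
  Multiset.count e ((nbrs2 G H x).val.map (cc G H s₀))

lemma mdeg_eq (hst : Stb (G := G) (H := H) s₀) {x y : V2 G H}
    (hxy : cc G H s₀ x = cc G H s₀ y) (e : Color s₀) :
    mdeg s₀ x e = mdeg s₀ y e := by
  have h := hst x y hxy
  have h2 : (nbrs2 G H x).val.map (cc G H s₀) = (nbrs2 G H y).val.map (cc G H s₀) :=
    congrArg Prod.snd h
  rw [mdeg, mdeg, h2]

variable (K : FeaturedGraph) (em : Fin K.n ↪ V2 G H)

/-- count of vertices of the component `K` with color `d` -/
noncomputable def cnt (d : Color s₀) : ℕ :=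
  Multiset.count d (Finset.univ.val.map (fun v => cc G H s₀ (em v)))

lemma cnt_card (d : Color s₀) :
    cnt s₀ K em d = (Finset.univ.filter (fun v => d = cc G H s₀ (em v))).card := by
  classical
  rw [cnt, Multiset.count_map]
  rfl

/-- number of ordered adjacent pairs in `K` with colors `(d, e)` -/
noncomputable def epairs (d e : Color s₀) : ℕ :=
  letI := K.adjDec
  ∑ p ∈ (Finset.univ ×ˢ Finset.univ : Finset (Fin K.n × Fin K.n)),
    if K.adj.Adj p.1 p.2 ∧ d = cc G H s₀ (em p.1) ∧ e = cc G H s₀ (em p.2) then 1 else 0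

lemma epairs_symm (d e : Color s₀) : epairs s₀ K em d e = epairs s₀ K em e d := by
  classical
  letI := K.adjDec
  rw [epairs, epairs]
  refine Finset.sum_equiv (Equiv.prodComm _ _) (by simp) ?_
  intro p _
  simp only [Equiv.prodComm_apply, Prod.fst_swap, Prod.snd_swap]
  refine if_congr ?_ rfl rfl
  constructor
  · rintro ⟨h1, h2, h3⟩; exact ⟨h1.symm, h3, h2⟩
  · rintro ⟨h1, h2, h3⟩; exact ⟨h1.symm, h3, h2⟩

lemma mdeg_em (hnb : ∀ v, nbrs2 G H (em v) = (K.nbrs v).map em)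
    (v : Fin K.n) (e : Color s₀) :
    mdeg s₀ (em v) e =
      letI := K.adjDec
      ∑ v' ∈ (Finset.univ : Finset (Fin K.n)),
        if K.adj.Adj v v' ∧ e = cc G H s₀ (em v') then 1 else 0 := by
  classical
  letI := K.adjDec
  rw [mdeg, hnb v, Finset.map_val, Multiset.map_map, Multiset.count_map]
  have h1 : Multiset.card ((K.nbrs v).val.filter (fun a => e = cc G H s₀ (em a)))
      = ((K.nbrs v).filter (fun a => e = cc G H s₀ (em a))).card := rfl
  rw [Function.comp_def, h1, Finset.card_filter]
  rw [FeaturedGraph.nbrs, Finset.sum_filter]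
  refine Finset.sum_congr rfl (fun v' _ => ?_)
  by_cases h1 : K.adj.Adj v v' <;> by_cases h2 : e = cc G H s₀ (em v') <;> simp [h1, h2]

lemma epairs_eq (hst : Stb (G := G) (H := H) s₀)
    (hnb : ∀ v, nbrs2 G H (em v) = (K.nbrs v).map em)
    (d e : Color s₀) (x : V2 G H) (hx : cc G H s₀ x = d) :
    epairs s₀ K em d e = cnt s₀ K em d * mdeg s₀ x e := by
  classical
  letI := K.adjDec
  rw [epairs, Finset.sum_product]
  have hrow : ∀ v : Fin K.n,
      (∑ v' ∈ (Finset.univ : Finset (Fin K.n)),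
        if K.adj.Adj v v' ∧ d = cc G H s₀ (em v) ∧ e = cc G H s₀ (em v') then 1 else 0)
      = if d = cc G H s₀ (em v) then mdeg s₀ x e else 0 := by
    intro v
    by_cases hv : d = cc G H s₀ (em v)
    · rw [if_pos hv]
      have : mdeg s₀ x e = mdeg s₀ (em v) e :=
        mdeg_eq s₀ hst (by rw [hx, hv]) e
      rw [this, mdeg_em s₀ K em hnb v e]
      refine Finset.sum_congr rfl (fun v' _ => ?_)
      refine if_congr ?_ rfl rfl
      constructor
      · rintro ⟨h1, _, h3⟩; exact ⟨h1, h3⟩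
      · rintro ⟨h1, h3⟩; exact ⟨h1, hv, h3⟩
    · rw [if_neg hv]
      refine Finset.sum_eq_zero (fun v' _ => ?_)
      rw [if_neg (fun hc => hv hc.2.1)]
  calc (∑ v ∈ (Finset.univ : Finset (Fin K.n)), ∑ v' ∈ (Finset.univ : Finset (Fin K.n)),
        if K.adj.Adj v v' ∧ d = cc G H s₀ (em v) ∧ e = cc G H s₀ (em v') then 1 else 0)
      = ∑ v ∈ (Finset.univ : Finset (Fin K.n)),
          if d = cc G H s₀ (em v) then mdeg s₀ x e else 0 :=
        Finset.sum_congr rfl (fun v _ => hrow v)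
    _ = ∑ v ∈ Finset.univ.filter (fun v => d = cc G H s₀ (em v)), mdeg s₀ x e :=
        (Finset.sum_filter _ _).symm
    _ = cnt s₀ K em d * mdeg s₀ x e := by
        rw [Finset.sum_const, cnt_card, smul_eq_mul]

end Stable


lemma nbrs2_symm {x y : V2 G H} (h : y ∈ nbrs2 G H x) : x ∈ nbrs2 G H y := by
  classical
  cases x with
  | inl v =>
    cases y with
    | inl v' =>
      simp only [nbrs2, Finset.mem_map, Function.Embedding.coeFn_mk] at h ⊢
      obtain ⟨u, hu, he⟩ := h
      obtain rfl : u = v' := Sum.inl_injective he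
      exact ⟨v, nbrs_mem.mpr (nbrs_mem.mp hu).symm, rfl⟩
    | inr w' =>
      simp only [nbrs2, Finset.mem_map, Function.Embedding.coeFn_mk] at h
      obtain ⟨u, _, he⟩ := h
      exact absurd he (by simp)
  | inr w =>
    cases y with
    | inl v' =>
      simp only [nbrs2, Finset.mem_map, Function.Embedding.coeFn_mk] at h
      obtain ⟨u, _, he⟩ := h
      exact absurd he (by simp)
    | inr w' =>
      simp only [nbrs2, Finset.mem_map, Function.Embedding.coeFn_mk] at h ⊢
      obtain ⟨u, hu, he⟩ := h
      obtain rfl : u = w' := Sum.inr_injective he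
      exact ⟨w, nbrs_mem.mpr (nbrs_mem.mp hu).symm, rfl⟩

lemma walk_prop (P : V2 G H → Prop)
    (hP : ∀ x y, y ∈ nbrs2 G H x → P x → P y)
    (K : FeaturedGraph) (em : Fin K.n ↪ V2 G H)
    (hnb : ∀ v, nbrs2 G H (em v) = (K.nbrs v).map em)
    (hconn : K.adj.Connected) (r : Fin K.n) (hr : P (em r)) :
    ∀ v, P (em v) := by
  have hwalk : ∀ {u v : Fin K.n} (_ : K.adj.Walk u v), P (em u) → P (em v) := by
    intro u v w
    induction w with
    | nil => exact id
    | @cons u' b v' hadj _ ih =>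
      intro hu
      refine ih (hP (em u') (em b) ?_ hu)
      rw [hnb u']
      exact Finset.mem_map_of_mem em (nbrs_mem.mpr hadj)
  intro v
  obtain ⟨w⟩ := hconn r v
  exact hwalk w hr

lemma ratio_step (s₀ : ℕ) (hst : Stb (G := G) (H := H) s₀)
    (emG : Fin G.n ↪ V2 G H) (emH : Fin H.n ↪ V2 G H)
    (hnbG : ∀ v, nbrs2 G H (emG v) = (G.nbrs v).map emG)
    (hnbH : ∀ w, nbrs2 G H (emH w) = (H.nbrs w).map emH)
    (d₀ : Color s₀) {x y : V2 G H} (hy : y ∈ nbrs2 G H x)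
    (hQ : cnt s₀ G emG (cc G H s₀ x) * cnt s₀ H emH d₀
        = cnt s₀ H emH (cc G H s₀ x) * cnt s₀ G emG d₀) :
    cnt s₀ G emG (cc G H s₀ y) * cnt s₀ H emH d₀
        = cnt s₀ H emH (cc G H s₀ y) * cnt s₀ G emG d₀ := by
  classical
  set d := cc G H s₀ x with hd
  set e := cc G H s₀ y with he
  set a := cnt s₀ G emG
  set b := cnt s₀ H emH
  have h1 : epairs s₀ G emG d e = a d * mdeg s₀ x e :=
    epairs_eq s₀ G emG hst hnbG d e x rfl
  have h2 : epairs s₀ G emG e d = a e * mdeg s₀ y d :=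
    epairs_eq s₀ G emG hst hnbG e d y rfl
  have h3 : a d * mdeg s₀ x e = a e * mdeg s₀ y d := by
    rw [← h1, ← h2]; exact epairs_symm s₀ G emG d e
  have h1' : epairs s₀ H emH d e = b d * mdeg s₀ x e :=
    epairs_eq s₀ H emH hst hnbH d e x rfl
  have h2' : epairs s₀ H emH e d = b e * mdeg s₀ y d :=
    epairs_eq s₀ H emH hst hnbH e d y rfl
  have h4 : b d * mdeg s₀ x e = b e * mdeg s₀ y d := by
    rw [← h1', ← h2']; exact epairs_symm s₀ H emH d e
  have hm : 0 < mdeg s₀ y d := by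
    have hx : x ∈ nbrs2 G H y := nbrs2_symm hy
    rw [mdeg]
    exact Multiset.count_pos.mpr (Multiset.mem_map.mpr ⟨x, Finset.mem_val.mpr hx, rfl⟩)
  have key : (a e * b d₀) * mdeg s₀ y d = (b e * a d₀) * mdeg s₀ y d := by
    calc (a e * b d₀) * mdeg s₀ y d = (a e * mdeg s₀ y d) * b d₀ := by ring
      _ = (a d * mdeg s₀ x e) * b d₀ := by rw [h3]
      _ = (a d * b d₀) * mdeg s₀ x e := by ring
      _ = (b d * a d₀) * mdeg s₀ x e := by rw [hQ]
      _ = (b d * mdeg s₀ x e) * a d₀ := by ring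
      _ = (b e * mdeg s₀ y d) * a d₀ := by rw [h4]
      _ = (b e * a d₀) * mdeg s₀ y d := by ring
  exact Nat.eq_of_mul_eq_mul_right hm key

end CRAux

open CRAux in
/-- If two connected featured graphs of the same order have nodes with
equal colors at some round `t ≥ 2n`, then Color Refinement does not distinguish the graphs. -/
theorem node_color_to_graph_indistinguishable (G H : FeaturedGraph)
    (hG : G.adj.Connected) (hH : H.adj.Connected) (hn : G.n = H.n)
    (v₀ : Fin G.n) (w₀ : Fin H.n) (t : ℕ) (ht : 2 * G.n ≤ t)
    (h : mpc G t v₀ = mpc H t w₀) :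
    ∀ s : ℕ,
      Multiset.map (mpc G s) Finset.univ.val = Multiset.map (mpc H s) Finset.univ.val := by
  classical
  obtain ⟨vex⟩ := hG.nonempty
  have hpos : 0 < G.n := vex.pos
  obtain ⟨s₀, hs₀lt, hst⟩ := exists_stb G H hn hpos
  set emG : Fin G.n ↪ V2 G H := ⟨Sum.inl, Sum.inl_injective⟩ with hemG
  set emH : Fin H.n ↪ V2 G H := ⟨Sum.inr, Sum.inr_injective⟩ with hemH
  have hnbG : ∀ v, nbrs2 G H (emG v) = (G.nbrs v).map emG := fun v => rfl
  have hnbH : ∀ w, nbrs2 G H (emH w) = (H.nbrs w).map emH := fun w => rfl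
  have h' : cc G H s₀ (Sum.inl v₀) = cc G H s₀ (Sum.inr w₀) := by
    refine cc_proj (le_trans (le_of_lt hs₀lt) ht) ?_
    rw [cc_inl, cc_inr]; exact h
  set κ : V2 G H → Color s₀ := cc G H s₀ with hκ
  set d₀ : Color s₀ := κ (Sum.inl v₀) with hd₀
  set a : Color s₀ → ℕ := cnt s₀ G emG with ha
  set b : Color s₀ → ℕ := cnt s₀ H emH with hb
  have hQstep : ∀ x y, y ∈ nbrs2 G H x →
      (a (κ x) * b d₀ = b (κ x) * a d₀) → (a (κ y) * b d₀ = b (κ y) * a d₀) :=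
    fun x y hy hQ => ratio_step s₀ hst emG emH hnbG hnbH d₀ hy hQ
  have hQl : ∀ v, a (κ (Sum.inl v)) * b d₀ = b (κ (Sum.inl v)) * a d₀ := by
    intro v
    exact walk_prop (fun x => a (κ x) * b d₀ = b (κ x) * a d₀) hQstep G emG hnbG hG v₀
      (mul_comm (a d₀) (b d₀)) v
  have hQr : ∀ w, a (κ (Sum.inr w)) * b d₀ = b (κ (Sum.inr w)) * a d₀ := by
    intro w
    refine walk_prop (fun x => a (κ x) * b d₀ = b (κ x) * a d₀) hQstep H emH hnbH hH w₀ ?_ w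
    show a (κ (Sum.inr w₀)) * b d₀ = b (κ (Sum.inr w₀)) * a d₀
    rw [show κ (Sum.inr w₀) = d₀ from h'.symm]
    exact mul_comm (a d₀) (b d₀)
  set D : Finset (Color s₀) := (Finset.univ : Finset (V2 G H)).image κ with hD
  have haSum : ∑ d ∈ D, a d = G.n := by
    have hfib := Finset.card_eq_sum_card_fiberwise
      (f := fun v : Fin G.n => κ (Sum.inl v)) (s := Finset.univ) (t := D)
      (fun v _ => Finset.mem_image_of_mem κ (Finset.mem_univ (Sum.inl v)))
    rw [Finset.card_univ, Fintype.card_fin] at hfib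
    rw [hfib]
    refine Finset.sum_congr rfl (fun d _ => ?_)
    rw [ha, cnt_card]
    congr 1
    exact Finset.filter_congr (fun v _ => eq_comm)
  have hbSum : ∑ d ∈ D, b d = G.n := by
    have hfib := Finset.card_eq_sum_card_fiberwise
      (f := fun w : Fin H.n => κ (Sum.inr w)) (s := Finset.univ) (t := D)
      (fun w _ => Finset.mem_image_of_mem κ (Finset.mem_univ (Sum.inr w)))
    rw [Finset.card_univ, Fintype.card_fin] at hfib
    rw [hn, hfib]
    refine Finset.sum_congr rfl (fun d _ => ?_)
    rw [hb, cnt_card]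
    congr 1
    exact Finset.filter_congr (fun w _ => eq_comm)
  have hsum : ∑ d ∈ D, a d * b d₀ = ∑ d ∈ D, b d * a d₀ := by
    refine Finset.sum_congr rfl (fun d hd => ?_)
    obtain ⟨x, _, rfl⟩ := Finset.mem_image.mp hd
    cases x with
    | inl v => exact hQl v
    | inr w => exact hQr w
  rw [← Finset.sum_mul, ← Finset.sum_mul, haSum, hbSum] at hsum
  have hba : b d₀ = a d₀ := Nat.eq_of_mul_eq_mul_left hpos hsum
  have had₀ : 0 < a d₀ := by
    rw [ha, cnt]
    refine Multiset.count_pos.mpr (Multiset.mem_map.mpr ⟨v₀, ?_, ?_⟩)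
    · exact Finset.mem_val.mpr (Finset.mem_univ v₀)
    · rw [hd₀]; rfl
  have hab : ∀ d, a d = b d := by
    intro d
    by_cases hd : d ∈ D
    · obtain ⟨x, _, rfl⟩ := Finset.mem_image.mp hd
      have hQx : a (κ x) * b d₀ = b (κ x) * a d₀ := by
        cases x with
        | inl v => exact hQl v
        | inr w => exact hQr w
      rw [hba] at hQx
      exact Nat.eq_of_mul_eq_mul_right had₀ hQx
    · have ha0 : a d = 0 := by
        rw [ha, cnt]
        refine Multiset.count_eq_zero.mpr (fun hc => hd ?_)
        obtain ⟨v, _, hv⟩ := Multiset.mem_map.mp hc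
        exact Finset.mem_image.mpr ⟨emG v, Finset.mem_univ _, hv⟩
      have hb0 : b d = 0 := by
        rw [hb, cnt]
        refine Multiset.count_eq_zero.mpr (fun hc => hd ?_)
        obtain ⟨w, _, hw⟩ := Multiset.mem_map.mp hc
        exact Finset.mem_image.mpr ⟨emH w, Finset.mem_univ _, hw⟩
      rw [ha0, hb0]
  -- the multiset equality at round s₀, on the disjoint union
  have hCs₀ : (Finset.univ.val.map (Sum.inl : Fin G.n → V2 G H)).map (cc G H s₀)
      = (Finset.univ.val.map (Sum.inr : Fin H.n → V2 G H)).map (cc G H s₀) := by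
    rw [Multiset.map_map, Multiset.map_map]
    refine Multiset.ext.mpr (fun d => ?_)
    exact hab d
  -- upward
  have hCge : ∀ s', s₀ ≤ s' →
      (Finset.univ.val.map (Sum.inl : Fin G.n → V2 G H)).map (cc G H s')
      = (Finset.univ.val.map (Sum.inr : Fin H.n → V2 G H)).map (cc G H s') := by
    intro s' hs'
    induction s', hs' using Nat.le_induction with
    | base => exact hCs₀
    | succ s' hs' ih => exact map_eq_map_of_factor ih (stb_ge hst hs')
  -- downward
  have hCdown : ∀ s',
      (Finset.univ.val.map (Sum.inl : Fin G.n → V2 G H)).map (cc G H (s'+1))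
      = (Finset.univ.val.map (Sum.inr : Fin H.n → V2 G H)).map (cc G H (s'+1)) →
      (Finset.univ.val.map (Sum.inl : Fin G.n → V2 G H)).map (cc G H s')
      = (Finset.univ.val.map (Sum.inr : Fin H.n → V2 G H)).map (cc G H s') := by
    intro s' hs'
    have hc := congrArg (Multiset.map (fun p : Color s' × Multiset (Color s') => p.1)) hs'
    simp only [Multiset.map_map] at hc ⊢
    exact (Multiset.map_map (fun p : Color s' × Multiset (Color s') => p.1)
        (cc G H (s'+1) ∘ Sum.inl) _).symm.trans (hc.trans (Multiset.map_map _ _ _))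
  have hCall : ∀ s',
      (Finset.univ.val.map (Sum.inl : Fin G.n → V2 G H)).map (cc G H s')
      = (Finset.univ.val.map (Sum.inr : Fin H.n → V2 G H)).map (cc G H s') := by
    intro s'
    rcases le_or_gt s₀ s' with hs | hs
    · exact hCge s' hs
    · have hj : ∀ j,
        (Finset.univ.val.map (Sum.inl : Fin G.n → V2 G H)).map (cc G H (s₀ - j))
        = (Finset.univ.val.map (Sum.inr : Fin H.n → V2 G H)).map (cc G H (s₀ - j)) := by
        intro j
        induction j with
        | zero => exact hCs₀
        | succ j ih =>
          rcases le_or_gt s₀ j with hle | hlt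
          · have e1 : s₀ - (j+1) = s₀ - j := by omega
            rw [e1]; exact ih
          · have e1 : s₀ - j = (s₀ - (j+1)) + 1 := by omega
            refine hCdown _ ?_
            rw [← e1]; exact ih
      have hj' := hj (s₀ - s')
      rwa [Nat.sub_sub_self (le_of_lt hs)] at hj'
  intro s
  have hC := hCall s
  rw [Multiset.map_map, Multiset.map_map] at hC
  calc Multiset.map (mpc G s) Finset.univ.val
      = Multiset.map (cc G H s ∘ Sum.inl) Finset.univ.val :=
        (Multiset.map_congr rfl (fun v _ => cc_inl s v)).symm
    _ = Multiset.map (cc G H s ∘ Sum.inr) Finset.univ.val := hC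
    _ = Multiset.map (mpc H s) Finset.univ.val :=
        Multiset.map_congr rfl (fun w _ => cc_inr s w)
end

section
/- Let G and H be connected featured graphs whose feature maps Z_G : V(G) → 𝔹 and Z_H : V(H) → 𝔹 are injective (individualized graphs), and let v ∈ V(G), w ∈ V(H). If mpc^t_G(v) = mpc^t_H(w) for all t ≥ 0, then there exists a graph isomorphism f : V(G) → V(H) with Z_H(f(u)) = Z_G(u) for all u ∈ V(G) and f(v) = w. -/
lemma mpc_zero (G : FeaturedGraph) (u : Fin G.n) : mpc G 0 u = G.feature u := rfl

lemma mpc_succ (G : FeaturedGraph) (t : ℕ) (u : Fin G.n) :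
    mpc G (t + 1) u
      = ((mpc G t u, (G.nbrs u).val.map (mpc G t)) : Color t × Multiset (Color t)) := rfl

/-- Projection of a level-`t` color to its level-0 component. -/
def projColor : (t : ℕ) → Color t → List Bool
  | 0, c => c
  | t + 1, c => projColor t (c : Color t × Multiset (Color t)).1

lemma proj_mpc (G : FeaturedGraph) : ∀ (t : ℕ) (u : Fin G.n),
    projColor t (mpc G t u) = G.feature u
  | 0, _ => rfl
  | t + 1, u => proj_mpc G t u

lemma mem_nbrs (G : FeaturedGraph) (u x : Fin G.n) : x ∈ G.nbrs u ↔ G.adj.Adj u x := by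
  letI := G.adjDec
  simp [FeaturedGraph.nbrs]

/-- Neighbor transfer: if `u` and `x` have the same colors at all rounds, then every neighbor
of `u` matches some neighbor of `x` at all rounds. -/
lemma step (A B : FeaturedGraph) (hBZ : Function.Injective B.feature)
    (u : Fin A.n) (x : Fin B.n) (hux : ∀ t, mpc A t u = mpc B t x)
    (u' : Fin A.n) (hu' : u' ∈ A.nbrs u) :
    ∃ x' ∈ B.nbrs x, ∀ t, mpc A t u' = mpc B t x' := by
  have hmult : ∀ t, (A.nbrs u).val.map (mpc A t) = (B.nbrs x).val.map (mpc B t) := by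
    intro t
    have h1 := hux (t + 1)
    rw [mpc_succ, mpc_succ] at h1
    exact congrArg Prod.snd h1
  -- find the match at level 0
  have h0 : mpc A 0 u' ∈ (B.nbrs x).val.map (mpc B 0) := by
    rw [← hmult 0]
    exact Multiset.mem_map_of_mem _ hu'
  obtain ⟨x', hx'mem, hx'0⟩ := Multiset.mem_map.mp h0
  refine ⟨x', hx'mem, fun t => ?_⟩
  have ht : mpc A t u' ∈ (B.nbrs x).val.map (mpc B t) := by
    rw [← hmult t]
    exact Multiset.mem_map_of_mem _ hu'
  obtain ⟨y, hymem, hy⟩ := Multiset.mem_map.mp ht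
  have hfeat : B.feature y = B.feature x' := by
    have h1 : projColor t (mpc B t y) = projColor t (mpc A t u') := by rw [hy]
    rw [proj_mpc, proj_mpc] at h1
    have h2 : B.feature x' = A.feature u' := by
      have := congrArg (projColor 0) hx'0
      rwa [proj_mpc, proj_mpc] at this
    rw [h1, h2]
  rw [← hy, hBZ hfeat]

/-- Along walks, having a color-matching partner propagates. -/
lemma exists_match (A B : FeaturedGraph) (hBZ : Function.Injective B.feature) :
    ∀ {a b : Fin A.n} (_ : A.adj.Walk a b),
      (∃ x : Fin B.n, ∀ t, mpc A t a = mpc B t x) →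
      ∃ x : Fin B.n, ∀ t, mpc A t b = mpc B t x := by
  intro a b p
  induction p with
  | nil => exact id
  | @cons a c b hadj q ih =>
    intro ⟨x, hx⟩
    obtain ⟨x', _, hx'⟩ := step A B hBZ a x hx c ((mem_nbrs A a c).mpr hadj)
    exact ih ⟨x', hx'⟩

/-- For connected individualized featured graphs, equality of all Color
Refinement colors of two roots yields a feature-preserving isomorphism matching the roots. -/
theorem individualized_mpc_to_iso (G H : FeaturedGraph)
    (hG : G.adj.Connected) (hH : H.adj.Connected)
    (hGZ : Function.Injective G.feature) (hHZ : Function.Injective H.feature)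
    (v : Fin G.n) (w : Fin H.n) (h : ∀ t : ℕ, mpc G t v = mpc H t w) :
    ∃ f : Fin G.n ≃ Fin H.n,
      (∀ u u' : Fin G.n, G.adj.Adj u u' ↔ H.adj.Adj (f u) (f u')) ∧
      (∀ u : Fin G.n, H.feature (f u) = G.feature u) ∧ f v = w := by
  classical
  -- every vertex of G has a matching partner in H
  have hex : ∀ u : Fin G.n, ∃ x : Fin H.n, ∀ t, mpc G t u = mpc H t x := by
    intro u
    obtain ⟨p⟩ := hG.preconnected v u
    exact exists_match G H hHZ p ⟨w, h⟩
  -- uniqueness of partner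
  have uniq : ∀ (u : Fin G.n) (x x' : Fin H.n),
      (∀ t, mpc G t u = mpc H t x) → (∀ t, mpc G t u = mpc H t x') → x = x' := by
    intro u x x' hx hx'
    apply hHZ
    have h1 := (hx 0).symm.trans (hx' 0)
    rwa [mpc_zero, mpc_zero] at h1
  set F : Fin G.n → Fin H.n := fun u => Classical.choose (hex u) with hF
  have spec : ∀ (u : Fin G.n) (t : ℕ), mpc G t u = mpc H t (F u) :=
    fun u => Classical.choose_spec (hex u)
  have featF : ∀ u : Fin G.n, H.feature (F u) = G.feature u := by
    intro u
    have := (spec u 0).symm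
    rwa [mpc_zero, mpc_zero] at this
  have hinj : Function.Injective F := by
    intro u u' huu
    apply hGZ
    rw [← featF u, ← featF u', huu]
  have hsurj : Function.Surjective F := by
    intro x
    obtain ⟨p⟩ := hH.preconnected w x
    obtain ⟨u, hu⟩ := exists_match H G hGZ p ⟨v, fun t => (h t).symm⟩
    exact ⟨u, uniq u (F u) x (spec u) (fun t => (hu t).symm)⟩
  refine ⟨Equiv.ofBijective F ⟨hinj, hsurj⟩, ?_, featF, ?_⟩
  · intro u u'
    constructor
    · intro hadj
      obtain ⟨x', hx'mem, hx'⟩ :=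
        step G H hHZ u (F u) (spec u) u' ((mem_nbrs G u u').mpr hadj)
      have hthis : x' = F u' := uniq u' x' (F u') hx' (spec u')
      show H.adj.Adj (F u) (F u')
      rw [← hthis]
      exact (mem_nbrs H (F u) x').mp hx'mem
    · intro hadj
      have hadj' : H.adj.Adj (F u) (F u') := hadj
      obtain ⟨u'', hu''mem, hu''⟩ :=
        step H G hGZ (F u) u (fun t => (spec u t).symm) (F u')
          ((mem_nbrs H (F u) (F u')).mpr hadj')
      have : u'' = u' := by
        apply hGZ
        have h1 := (hu'' 0).symm
        rw [mpc_zero, mpc_zero] at h1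
        rw [h1, ← featF u']
      rw [← this]
      exact (mem_nbrs G u u'').mp hu''mem
  · exact uniq v (F v) w (spec v) h
end

section
/- There exist d ∈ ℕ and a ReLU MLP F : ℚ^d → ℚ^d such that for every binary string x, the sequence of iterates of F starting from the initial vector (1, 0, rqe(x), 0, …, 0) ∈ ℚ^d is eventually constant, and its eventual value has first coordinate equal to 0 and fourth coordinate equal to rbe(x). -/
def relu (x : ℚ) : ℚ := max x 0

/-- `IsMLP f` says `f` is computed by a ReLU MLP with rational weights. -/
inductive IsMLP : {din dout : ℕ} → ((Fin din → ℚ) → (Fin dout → ℚ)) → Prop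
  | base {din dout : ℕ} (W : Matrix (Fin dout) (Fin din) ℚ) (b : Fin dout → ℚ) :
      IsMLP (fun x i => relu ((∑ j, W i j * x j) + b i))
  | step {din dmid dout : ℕ} {g : (Fin din → ℚ) → (Fin dmid → ℚ)} (hg : IsMLP g)
      (W : Matrix (Fin dout) (Fin dmid) ℚ) (b : Fin dout → ℚ) :
      IsMLP (fun x i => relu ((∑ j, W i j * g x j) + b i))

/-- A ReLU MLP, packaged with the function it computes. -/
structure MLP (din dout : ℕ) where
  eval : (Fin din → ℚ) → (Fin dout → ℚ)
  isMLP : IsMLP eval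

/-- Rational binary encoding of a binary string. -/
def rbe : List Bool → ℚ
  | [] => 0
  | b :: t => ((if b then 1 else 0) + rbe t) / 2

/-- Rational quaternary encoding of a binary string. -/
def rqe : List Bool → ℚ
  | [] => 0
  | b :: t => ((if b then (3 : ℚ) else 1) + rqe t) / 4

/-- The vector in `ℚ^d` whose first coordinates are the listed values, padded with zeros. -/
def initVec (d : ℕ) (vals : List ℚ) : Fin d → ℚ := fun i => vals.getD (i : ℕ) 0

/- ### Auxiliary construction -/

lemma relu_eval {x y : ℚ} (h : x = y) (hy : 0 ≤ y) : relu x = y := by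
  rw [h, relu, max_eq_left hy]

lemma relu_zero' {x : ℚ} (h : x ≤ 0) : relu x = 0 := by
  rw [relu, max_eq_right h]

def W1 : Matrix (Fin 6) (Fin 5) ℚ := fun i j =>
  if (i:ℕ) ≤ 3 then (if (j:ℕ) = 2 then 4 else 0)
  else if (i:ℕ) = 4 then (if (j:ℕ) = 3 then 1 else 0)
  else (if (j:ℕ) = 0 then 1/2 else if (j:ℕ) = 4 then 1 else 0)
def b1 : Fin 6 → ℚ := fun i =>
  if (i:ℕ) = 0 then -2 else if (i:ℕ) = 1 then -3 else if (i:ℕ) = 3 then -1 else 0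
def W2 : Matrix (Fin 4) (Fin 6) ℚ := fun i j =>
  if (i:ℕ) = 0 then (if (j:ℕ) = 0 then -2 else if (j:ℕ) = 1 then 2
    else if (j:ℕ) = 2 then 1 else 0)
  else if (i:ℕ) = 1 then (if (j:ℕ) = 0 then 1 else if (j:ℕ) = 1 then -1
    else if (j:ℕ) = 5 then 1 else 0)
  else if (i:ℕ) = 2 then (if (j:ℕ) = 4 then 1 else 0)
  else (if (j:ℕ) = 2 then 1 else if (j:ℕ) = 3 then -1
    else if (j:ℕ) = 5 then 1/2 else 0)
def b2 : Fin 4 → ℚ := fun i => if (i:ℕ) = 2 then 0 else -1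
def W3 : Matrix (Fin 5) (Fin 4) ℚ := fun i j =>
  if (i:ℕ) = 2 then (if (j:ℕ) = 0 then 1 else 0)
  else if (i:ℕ) = 3 then (if (j:ℕ) = 1 ∨ (j:ℕ) = 2 then 1 else 0)
  else if (i:ℕ) = 4 then (if (j:ℕ) = 3 then 1 else 0)
  else 0
def b3 : Fin 5 → ℚ := fun _ => 0

def L1 : (Fin 5 → ℚ) → Fin 6 → ℚ := fun x i => relu ((∑ j, W1 i j * x j) + b1 i)
def L2 : (Fin 6 → ℚ) → Fin 4 → ℚ := fun x i => relu ((∑ j, W2 i j * x j) + b2 i)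
def L3 : (Fin 4 → ℚ) → Fin 5 → ℚ := fun x i => relu ((∑ j, W3 i j * x j) + b3 i)

def Fe : (Fin 5 → ℚ) → Fin 5 → ℚ := fun x => L3 (L2 (L1 x))

lemma Fe_isMLP : IsMLP Fe :=
  IsMLP.step (IsMLP.step (IsMLP.base W1 b1) W2 b2) W3 b3

lemma L1_apply (f u q a s : ℚ) :
    L1 ![f,u,q,a,s] = ![relu (4*q-2), relu (4*q-3), relu (4*q), relu (4*q-1),
      relu a, relu (f/2 + s)] := by
  funext i
  fin_cases i <;> (simp [L1, W1, b1, Fin.sum_univ_succ]; try (congr 1; ring))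

lemma L2_apply (y0 y1 y2 y3 y4 y5 : ℚ) :
    L2 ![y0,y1,y2,y3,y4,y5] = ![relu (-2*y0+2*y1+y2-1), relu (y0-y1+y5-1),
      relu y4, relu (y2-y3+y5/2-1)] := by
  funext i
  fin_cases i <;> (simp [L2, W2, b2, Fin.sum_univ_succ]; try (congr 1; ring))

lemma L3_apply (z0 z1 z2 z3 : ℚ) :
    L3 ![z0,z1,z2,z3] = ![0, 0, relu z0, relu (z1+z2), relu z3] := by
  funext i
  fin_cases i <;>
    (simp [L3, W3, b3, Fin.sum_univ_succ, relu_zero' le_rfl]; try (congr 1; ring))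

lemma rqe_nonneg (x : List Bool) : 0 ≤ rqe x := by
  induction x with
  | nil => simp [rqe]
  | cons b t ih => cases b <;> simp [rqe] <;> linarith

lemma rqe_lt_one (x : List Bool) : rqe x < 1 := by
  induction x with
  | nil => norm_num [rqe]
  | cons b t ih =>
    have := rqe_nonneg t
    cases b <;> simp [rqe] <;> linarith

lemma rbe_nonneg (x : List Bool) : 0 ≤ rbe x := by
  induction x with
  | nil => simp [rbe]
  | cons b t ih => cases b <;> simp [rbe] <;> linarith

/-- One step on the empty-queue state. -/
lemma step_nil (f s a : ℚ) (ha : 0 ≤ a) (hσ0 : 0 ≤ f/2 + s) (hσ1 : f/2 + s ≤ 1/2) :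
    Fe ![f, 0, 0, a, s] = ![0, 0, 0, a, 0] := by
  show L3 (L2 (L1 _)) = _
  rw [L1_apply]
  rw [show relu (4*(0:ℚ)-2) = 0 from relu_zero' (by norm_num)]
  rw [show relu (4*(0:ℚ)-3) = 0 from relu_zero' (by norm_num)]
  rw [show relu (4*(0:ℚ)) = 0 from relu_eval (by ring) le_rfl]
  rw [show relu (4*(0:ℚ)-1) = 0 from relu_zero' (by norm_num)]
  rw [relu_eval (rfl : a = a) ha, relu_eval (rfl : f/2+s = f/2+s) hσ0]
  rw [L2_apply]
  rw [show relu (-2*(0:ℚ)+2*0+0-1) = 0 from relu_zero' (by norm_num)]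
  rw [show relu ((0:ℚ)-0+(f/2+s)-1) = 0 from relu_zero' (by linarith)]
  rw [relu_eval (rfl : a = a) ha]
  rw [show relu ((0:ℚ)-0+(f/2+s)/2-1) = 0 from relu_zero' (by linarith)]
  rw [L3_apply]
  rw [show relu (0:ℚ) = 0 from relu_zero' le_rfl]
  rw [show relu ((0:ℚ)+a) = a from relu_eval (by ring) ha]

/-- One step on a nonempty-queue state. -/
lemma step_cons (b : Bool) (r f s a : ℚ) (hr0 : 0 ≤ r) (hr1 : r < 1)
    (ha : 0 ≤ a) (hσ0 : 0 ≤ f/2 + s) (hσ1 : f/2 + s ≤ 1/2) :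
    Fe ![f, 0, ((if b then (3:ℚ) else 1) + r)/4, a, s] =
      ![0, 0, r, a + (if b then f/2 + s else 0), (f/2+s)/2] := by
  show L3 (L2 (L1 _)) = _
  rw [L1_apply]
  cases b
  · simp only [Bool.false_eq_true, if_false]
    rw [show relu (4*(((1:ℚ)+r)/4)-2) = 0 from relu_zero' (by linarith)]
    rw [show relu (4*(((1:ℚ)+r)/4)-3) = 0 from relu_zero' (by linarith)]
    rw [show relu (4*(((1:ℚ)+r)/4)) = 1+r from relu_eval (by ring) (by linarith)]
    rw [show relu (4*(((1:ℚ)+r)/4)-1) = r from relu_eval (by ring) hr0]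
    rw [relu_eval (rfl : a = a) ha, relu_eval (rfl : f/2+s = f/2+s) hσ0]
    rw [L2_apply]
    rw [show relu (-2*(0:ℚ)+2*0+(1+r)-1) = r from relu_eval (by ring) hr0]
    rw [show relu ((0:ℚ)-0+(f/2+s)-1) = 0 from relu_zero' (by linarith)]
    rw [relu_eval (rfl : a = a) ha]
    rw [show relu ((1+r)-r+(f/2+s)/2-1) = (f/2+s)/2 from relu_eval (by ring) (by linarith)]
    rw [L3_apply]
    rw [relu_eval (rfl : r = r) hr0]
    rw [show relu ((0:ℚ)+a) = a + 0 from relu_eval (by ring) (by linarith)]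
    rw [show relu ((f/2+s)/2) = (f/2+s)/2 from relu_eval rfl (by linarith)]
  · simp only [if_true]
    rw [show relu (4*(((3:ℚ)+r)/4)-2) = 1+r from relu_eval (by ring) (by linarith)]
    rw [show relu (4*(((3:ℚ)+r)/4)-3) = r from relu_eval (by ring) hr0]
    rw [show relu (4*(((3:ℚ)+r)/4)) = 3+r from relu_eval (by ring) (by linarith)]
    rw [show relu (4*(((3:ℚ)+r)/4)-1) = 2+r from relu_eval (by ring) (by linarith)]
    rw [relu_eval (rfl : a = a) ha, relu_eval (rfl : f/2+s = f/2+s) hσ0]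
    rw [L2_apply]
    rw [show relu (-2*(1+r)+2*r+(3+r)-1) = r from relu_eval (by ring) hr0]
    rw [show relu ((1+r)-r+(f/2+s)-1) = f/2+s from relu_eval (by ring) hσ0]
    rw [relu_eval (rfl : a = a) ha]
    rw [show relu ((3+r)-(2+r)+(f/2+s)/2-1) = (f/2+s)/2 from relu_eval (by ring) (by linarith)]
    rw [L3_apply]
    rw [relu_eval (rfl : r = r) hr0]
    rw [show relu ((f/2+s)+a) = a + (f/2+s) from relu_eval (by ring) (by linarith)]
    rw [show relu ((f/2+s)/2) = (f/2+s)/2 from relu_eval rfl (by linarith)]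

lemma run (x : List Bool) : ∀ f s a : ℚ, 0 ≤ a → 0 ≤ f/2 + s → f/2 + s ≤ 1/2 →
    Fe^[x.length + 1] ![f, 0, rqe x, a, s] = ![0, 0, 0, a + (f/2+s) * (2 * rbe x), 0] := by
  induction x with
  | nil =>
    intro f s a ha h0 h1
    rw [show ([] : List Bool).length + 1 = 1 from rfl, Function.iterate_one,
      show rqe [] = 0 from rfl, step_nil f s a ha h0 h1,
      show rbe [] = 0 from rfl]
    norm_num
  | cons b t ih =>
    intro f s a ha h0 h1
    rw [show (b::t).length + 1 = (t.length + 1) + 1 by simp]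
    rw [Function.iterate_succ_apply]
    rw [show rqe (b::t) = ((if b then (3:ℚ) else 1) + rqe t)/4 from rfl]
    rw [step_cons b (rqe t) f s a (rqe_nonneg t) (rqe_lt_one t) ha h0 h1]
    have ha' : 0 ≤ a + (if b then f/2 + s else 0) := by
      split_ifs <;> linarith
    have h0' : 0 ≤ (0:ℚ)/2 + (f/2+s)/2 := by linarith
    have h1' : (0:ℚ)/2 + (f/2+s)/2 ≤ 1/2 := by linarith
    rw [ih 0 ((f/2+s)/2) _ ha' h0' h1']
    congr 1
    funext i
    fin_cases i <;> try rfl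
    show a + (if b then f/2 + s else 0) + (0/2+(f/2+s)/2) * (2*rbe t)
        = a + (f/2+s) * (2 * rbe (b::t))
    rw [show rbe (b::t) = ((if b then (1:ℚ) else 0) + rbe t)/2 from rfl]
    cases b <;> simp <;> ring

lemma fix_iter (a : ℚ) (ha : 0 ≤ a) : ∀ k : ℕ,
    Fe^[k] ![0, 0, 0, a, 0] = ![0, 0, 0, a, 0] := by
  intro k
  induction k with
  | zero => rfl
  | succ n ihn =>
    rw [Function.iterate_succ_apply,
      step_nil 0 0 a ha (by norm_num) (by norm_num), ihn]

/-- There is a recurrent ReLU MLP which, started from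
`(1, 0, rqe(x), 0, …, 0)` for a binary string `x`, eventually stabilizes with first
coordinate `0` and fourth coordinate `rbe(x)`. -/
theorem mlp_q2b_translation :
    ∃ (d : ℕ) (hd : 4 ≤ d) (F : MLP d d), ∀ x : List Bool,
      ∃ T : ℕ,
        (∀ t, T ≤ t →
          F.eval^[t] (initVec d [1, 0, rqe x]) = F.eval^[T] (initVec d [1, 0, rqe x])) ∧
        F.eval^[T] (initVec d [1, 0, rqe x]) ⟨0, by omega⟩ = 0 ∧
        F.eval^[T] (initVec d [1, 0, rqe x]) ⟨3, by omega⟩ = rbe x := by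
  refine ⟨5, by omega, ⟨Fe, Fe_isMLP⟩, fun x => ?_⟩
  have hinit : initVec 5 [1, 0, rqe x] = ![1, 0, rqe x, 0, 0] := by
    funext i; fin_cases i <;> rfl
  have hT : Fe^[x.length + 1] ![1, 0, rqe x, 0, 0] = ![0, 0, 0, rbe x, 0] := by
    rw [run x 1 0 0 le_rfl (by norm_num) (by norm_num)]
    congr 1
    funext i
    fin_cases i <;> try rfl
    show (0:ℚ) + (1/2 + 0) * (2 * rbe x) = rbe x
    ring
  refine ⟨x.length + 1, ?_, ?_, ?_⟩
  · intro t ht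
    show Fe^[t] _ = Fe^[x.length + 1] _
    obtain ⟨k, rfl⟩ := Nat.exists_eq_add_of_le ht
    rw [hinit, hT, Nat.add_comm, Function.iterate_add_apply, hT,
      fix_iter (rbe x) (rbe_nonneg x) k]
  · show Fe^[x.length + 1] _ ⟨0, _⟩ = 0
    rw [hinit, hT]
    rfl
  · show Fe^[x.length + 1] _ ⟨3, _⟩ = rbe x
    rw [hinit, hT]
    rfl
end
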